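/- (Conditional triangle inequality for clusters.) Fix g ∈ [n], a color v, and a cluster A₀ of grading (g−1)·𝟏. Let a, b, c be pairwise distinct posts and let A, B, C be the subclusters of A₀ in which disk (v,g) occupies a, b, c respectively. Let α be a configuration in A that is fixed by the reflective map R^g_{b,c}, and let β be a configuration in B. Then for every valid sequence ν from α to β that decomposes as ν = ν_A + ν_C + ν_B with the parts contained in A, C, B respectively (in that order), there exists a valid sequence μ from α to β decomposing as μ = μ_A + μ_B with parts contained in A and B, such that the transfer length of μ is strictly less than that of ν. -/

import Mathlib

/-- A configuration of `t` towers of `n` disks on `p` posts: entry `α u y` is the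
post occupied by the `y`-th largest disk of color `u` (columns 0-indexed,
column `y` holds the disks of size index `y`). -/
abbrev Config (t n p : ℕ) := Fin t → Fin n → Fin p

/-- Validity: no two equal-sized disks share a post (column-wise injectivity). -/
def ValidConfig {t n p : ℕ} (α : Config t n p) : Prop :=
  ∀ y : Fin n, Function.Injective fun u => α u y

/-- EREW-adjacency: at least one disk moves, and every moved disk is topmost at
its source beforehand and at its destination afterwards. -/
def EREW {t n p : ℕ} (α β : Config t n p) : Prop :=
  α ≠ β ∧
    ∀ u j, α u j ≠ β u j →
      ∀ v : Fin t, ∀ y : Fin n, (j : ℕ) < (y : ℕ) →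
        α v y ≠ α u j ∧ β v y ≠ β u j

/-- One step of a valid sequence: equal or EREW-adjacent configurations. -/
def Step {t n p : ℕ} (α β : Config t n p) : Prop := α = β ∨ EREW α β

/-- The set of disks moved between two configurations (the transfer vector:
each moved disk determines its source and destination posts). -/
def moves {t n p : ℕ} (α β : Config t n p) : Finset (Fin t × Fin n) :=
  Finset.univ.filter fun d => α d.1 d.2 ≠ β d.1 d.2

/-- A valid sequence of configurations. -/
def ValidSeq {t n p : ℕ} (l : List (Config t n p)) : Prop :=
  (∀ α ∈ l, ValidConfig α) ∧ l.Chain' Step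

/-- Transfer length of a configuration sequence: total number of disk moves. -/
def transferLength {t n p : ℕ} : List (Config t n p) → ℕ
  | [] => 0
  | [_] => 0
  | α :: β :: rest => (moves α β).card + transferLength (β :: rest)

/-- Containment in the cluster of grading `g·𝟏` determined by the placement `B`:
the configuration agrees with `B` on all columns of index `< g`. -/
def InCluster {t n p : ℕ} (g : ℕ) (B α : Config t n p) : Prop :=
  ∀ u : Fin t, ∀ y : Fin n, (y : ℕ) < g → α u y = B u y

/-- The translative map onto the cluster of grading `g·𝟏` determined by `B`. -/
def T {t n p : ℕ} (g : ℕ) (B : Config t n p) (α : Config t n p) : Config t n p :=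
  fun u y => if (y : ℕ) < g then B u y else α u y

/-- The reflective map swapping posts `q` and `r` on all columns of index `≥ g`. -/
def R {t n p : ℕ} (g : ℕ) (q r : Fin p) (α : Config t n p) : Config t n p :=
  fun u y => if g ≤ (y : ℕ) then
    (if α u y = q then r else if α u y = r then q else α u y) else α u y

/-! Apply `R d b c` to the `A`- and `C`-parts of `ν`. The reflection preserves validity, every
step inside a cluster and every set of moved disks; it fixes `α` and the subcluster `A`, and it
carries `C` onto `B`. Only the junction step `γ → δ` from the last `C`-configuration to the first
`B`-configuration changes. There disk `(v,d)` moves from `c` to `b`, so by EREW no other disk of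
index `≥ d` sits at `c` in `γ` or at `b` in `δ`. Hence `R d b c γ → δ` is still EREW, and it moves
exactly the disks moved by `γ → δ` except `(v,d)`. -/

section Reflection

variable {t n p : ℕ}

theorem R_apply_eq_ite (g : ℕ) (q r : Fin p) (α : Config t n p) (u : Fin t) (y : Fin n) :
    R g q r α u y = if g ≤ (y : ℕ) then Equiv.swap q r (α u y) else α u y := by
  simp [R, Equiv.swap_apply_def]

theorem R_apply_of_lt {g : ℕ} (q r : Fin p) (α : Config t n p) (u : Fin t) {y : Fin n}
    (h : (y : ℕ) < g) : R g q r α u y = α u y := by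
  simp [R_apply_eq_ite, Nat.not_le.mpr h]

theorem R_apply_of_le {g : ℕ} (q r : Fin p) (α : Config t n p) (u : Fin t) {y : Fin n}
    (h : g ≤ (y : ℕ)) : R g q r α u y = Equiv.swap q r (α u y) := by
  simp [R_apply_eq_ite, h]

theorem R_involutive (g : ℕ) (q r : Fin p) : Function.Involutive (R (t := t) (n := n) g q r) := by
  intro α
  funext u y
  simp only [R_apply_eq_ite]
  split_ifs <;> simp

theorem R_apply_self {g : Fin n} (q r : Fin p) (α : Config t n p) (u : Fin t) :
    R g q r α u g = Equiv.swap q r (α u g) :=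
  R_apply_of_le q r α u le_rfl

theorem validConfig_R {α : Config t n p} (h : ValidConfig α) (g : ℕ) (q r : Fin p) :
    ValidConfig (R g q r α) := by
  intro y u w huw
  simp only [R_apply_eq_ite] at huw
  split_ifs at huw
  exacts [h y ((Equiv.swap q r).injective huw), h y huw]

theorem inCluster_R_iff {g : ℕ} {q r : Fin p} {B α : Config t n p} :
    InCluster g B (R g q r α) ↔ InCluster g B α :=
  forall₂_congr fun u y => imp_congr_right fun hy => by rw [R_apply_of_lt q r α u hy]

theorem inCluster_R_and_apply_self {g : Fin n} {q r : Fin p} {B α : Config t n p} {u : Fin t}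
    {x y : Fin p} (h : InCluster g B α ∧ α u g = x) (hxy : Equiv.swap q r x = y) :
    InCluster g B (R g q r α) ∧ R g q r α u g = y :=
  ⟨inCluster_R_iff.2 h.1, by rw [R_apply_self, h.2, hxy]⟩

theorem mem_moves {γ δ : Config t n p} {u : Fin t} {j : Fin n} :
    (u, j) ∈ moves γ δ ↔ γ u j ≠ δ u j := by
  simp [moves]

theorem moves_R (g : ℕ) (q r : Fin p) (γ δ : Config t n p) :
    moves (R g q r γ) (R g q r δ) = moves γ δ := by
  ext ⟨u, j⟩
  simp only [mem_moves, R_apply_eq_ite]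
  split_ifs
  exacts [(Equiv.swap q r).injective.ne_iff, Iff.rfl]

theorem InCluster.of_common_base {g : ℕ} {B γ δ : Config t n p} (hγ : InCluster g B γ)
    (hδ : InCluster g B δ) : InCluster g γ δ :=
  fun u y hy => (hδ u y hy).trans (hγ u y hy).symm

theorem le_of_mem_moves {g : ℕ} {γ δ : Config t n p} (hlow : InCluster g γ δ) {u : Fin t}
    {j : Fin n} (hm : (u, j) ∈ moves γ δ) : g ≤ (j : ℕ) := by
  by_contra! hj
  exact mem_moves.1 hm (hlow u j hj).symm

theorem step_R {g : ℕ} (q r : Fin p) {γ δ : Config t n p} (hlow : InCluster g γ δ)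
    (h : Step γ δ) : Step (R g q r γ) (R g q r δ) := by
  rcases h with rfl | ⟨hne, hE⟩
  · exact Or.inl rfl
  refine Or.inr ⟨fun heq => hne ?_, fun u j hj w y hjy => ?_⟩
  · exact (R_involutive g q r).injective heq
  have hm : (u, j) ∈ moves γ δ := by rw [← moves_R g q r, mem_moves]; exact hj
  have hgj := le_of_mem_moves hlow hm
  have hgy : g ≤ (y : ℕ) := hgj.trans hjy.le
  simp only [R_apply_of_le _ _ _ _ hgj, R_apply_of_le _ _ _ _ hgy,
    (Equiv.swap q r).injective.ne_iff]
  exact hE u j (mem_moves.1 hm) w y hjy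

end Reflection

section Sequences

variable {t n p : ℕ}

theorem transferLength_append_cons :
    ∀ (l : List (Config t n p)) (hl : l ≠ []) (x : Config t n p) (r : List (Config t n p)),
      transferLength (l ++ x :: r) =
        transferLength l + (moves (l.getLast hl) x).card + transferLength (x :: r)
  | [_], _, _, _ => by simp [transferLength]
  | a :: b :: l, _, x, r => by
    have ih := transferLength_append_cons (b :: l) (List.cons_ne_nil _ _) x r
    simp only [List.cons_append, transferLength, List.getLast_cons_cons] at ih ⊢
    omega

theorem transferLength_map {f : Config t n p → Config t n p}
    (hf : ∀ γ δ, moves (f γ) (f δ) = moves γ δ) :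
    ∀ l : List (Config t n p), transferLength (l.map f) = transferLength l
  | [] => rfl
  | [_] => rfl
  | a :: b :: l => by
    have ih := transferLength_map hf (b :: l)
    simp only [List.map_cons, transferLength, hf] at ih ⊢
    rw [ih]

theorem validSeq_iff {l : List (Config t n p)} :
    ValidSeq l ↔ (∀ γ ∈ l, ValidConfig γ) ∧ l.IsChain Step :=
  Iff.rfl

theorem validSeq_append_cons {l : List (Config t n p)} (hl : l ≠ []) {x : Config t n p}
    {r : List (Config t n p)} :
    ValidSeq (l ++ x :: r) ↔ ValidSeq l ∧ ValidSeq (x :: r) ∧ Step (l.getLast hl) x := by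
  simp only [validSeq_iff, List.isChain_append, List.getLast?_eq_some_getLast hl,
    List.head?_cons, Option.mem_def, Option.some_inj, forall_eq', List.mem_append,
    or_imp, forall_and]
  tauto

theorem validSeq_map_R {g : ℕ} (q r : Fin p) {B : Config t n p} {l : List (Config t n p)}
    (h : ValidSeq l) (hcl : ∀ γ ∈ l, InCluster g B γ) : ValidSeq (l.map (R g q r)) := by
  refine ⟨fun γ hγ => ?_, ?_⟩
  · obtain ⟨γ, hγl, rfl⟩ := List.mem_map.1 hγ
    exact validConfig_R (h.1 γ hγl) g q r
  · exact (List.isChain_map _).2 <| h.2.imp_of_mem_imp fun γ δ hγ hδ =>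
      step_R q r ((hcl γ hγ).of_common_base (hcl δ hδ))

end Sequences

section Junction

variable {t n p : ℕ} {v : Fin t} {d : Fin n} {b c : Fin p} {γ δ : Config t n p}

theorem EREW.apply_ne_of_moved (hγ : ValidConfig γ) (hδ : ValidConfig δ) (h : EREW γ δ)
    (hvd : γ v d ≠ δ v d) {u : Fin t} {j : Fin n} (huj : (u, j) ≠ (v, d))
    (hdj : (d : ℕ) ≤ j) : γ u j ≠ γ v d ∧ δ u j ≠ δ v d := by
  rcases hdj.eq_or_lt with hdj | hdj
  · obtain rfl : j = d := Fin.ext hdj.symm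
    have huv : u ≠ v := fun huv => huj (by rw [huv])
    exact ⟨fun he => huv (hγ j he), fun he => huv (hδ j he)⟩
  · exact h.2 v d hvd u j hdj

theorem moves_R_subset_erase_of_junction (hbc : b ≠ c) (hγ : ValidConfig γ)
    (hδ : ValidConfig δ) (hlow : InCluster d γ δ) (hγc : γ v d = c) (hδb : δ v d = b)
    (hE : EREW γ δ) : moves (R d b c γ) δ ⊆ (moves γ δ).erase (v, d) := by
  rintro ⟨u, j⟩ hm
  rw [mem_moves] at hm
  have hdj : (d : ℕ) ≤ j := by
    by_contra! hj
    exact hm ((R_apply_of_lt _ _ _ _ hj).trans (hlow u j hj).symm)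
  have huj : (u, j) ≠ (v, d) := by
    rintro ⟨⟩
    exact hm (by rw [R_apply_of_le _ _ _ _ le_rfl, hγc, Equiv.swap_apply_right, hδb])
  have hvd : γ v d ≠ δ v d := by rw [hγc, hδb]; exact hbc.symm
  obtain ⟨hγu, hδu⟩ := hE.apply_ne_of_moved hγ hδ hvd huj hdj
  rw [hγc] at hγu
  rw [hδb] at hδu
  refine Finset.mem_erase.2 ⟨huj, mem_moves.2 fun heq => hm ?_⟩
  rw [R_apply_of_le _ _ _ _ hdj, Equiv.swap_apply_of_ne_of_ne (heq ▸ hδu) hγu, heq]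

theorem card_moves_R_lt_of_junction (hbc : b ≠ c) (hγ : ValidConfig γ) (hδ : ValidConfig δ)
    (hlow : InCluster d γ δ) (hγc : γ v d = c) (hδb : δ v d = b) (hE : EREW γ δ) :
    (moves (R d b c γ) δ).card < (moves γ δ).card := by
  have hvd : (v, d) ∈ moves γ δ := by rw [mem_moves, hγc, hδb]; exact hbc.symm
  exact (Finset.card_le_card (moves_R_subset_erase_of_junction hbc hγ hδ hlow hγc hδb hE)).trans_lt
    (Finset.card_erase_lt_of_mem hvd)

theorem step_R_of_junction (hbc : b ≠ c) (hγ : ValidConfig γ) (hδ : ValidConfig δ)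
    (hlow : InCluster d γ δ) (hγc : γ v d = c) (hδb : δ v d = b) (hE : EREW γ δ) :
    Step (R d b c γ) δ := by
  by_cases heq : R d b c γ = δ
  · exact Or.inl heq
  refine Or.inr ⟨heq, fun u j hj w y hjy => ?_⟩
  have hm := Finset.mem_of_mem_erase <|
    moves_R_subset_erase_of_junction hbc hγ hδ hlow hγc hδb hE (mem_moves.2 hj)
  have hdj := le_of_mem_moves hlow hm
  rw [R_apply_of_le _ _ _ _ (hdj.trans hjy.le), R_apply_of_le _ _ _ _ hdj,
    (Equiv.swap b c).injective.ne_iff]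
  exact hE.2 u j (mem_moves.1 hm) w y hjy

theorem ValidSeq.reflect_prefix (hbc : b ≠ c) {A₀ : Config t n p} {l r : List (Config t n p)}
    (hl : l ≠ []) (hν : ValidSeq (l ++ δ :: r)) (hcl : ∀ γ ∈ l, InCluster d A₀ γ)
    (hδcl : InCluster d A₀ δ) (hγc : l.getLast hl v d = c) (hδb : δ v d = b) :
    ValidSeq (l.map (R d b c) ++ δ :: r) ∧
      transferLength (l.map (R d b c) ++ δ :: r) < transferLength (l ++ δ :: r) := by
  obtain ⟨hlv, hrv, hstep⟩ := (validSeq_append_cons hl).1 hν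
  set γ := l.getLast hl with hγdef
  have hγ : ValidConfig γ := hlv.1 γ (List.getLast_mem hl)
  have hδ : ValidConfig δ := hrv.1 δ List.mem_cons_self
  have hlow : InCluster d γ δ := (hcl γ (List.getLast_mem hl)).of_common_base hδcl
  have hE : EREW γ δ := hstep.resolve_left fun he => hbc (by rw [← hδb, ← hγc, he])
  have hmap : l.map (R d b c) ≠ [] := by simpa using hl
  have hlast : (l.map (R d b c)).getLast hmap = R d b c γ := List.getLast_map hmap
  refine ⟨(validSeq_append_cons hmap).2 ⟨validSeq_map_R b c hlv hcl, hrv, ?_⟩, ?_⟩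
  · exact hlast ▸ step_R_of_junction hbc hγ hδ hlow hγc hδb hE
  · rw [transferLength_append_cons _ hmap, transferLength_append_cons _ hl, hlast, ← hγdef,
      transferLength_map (moves_R _ _ _)]
    have := card_moves_R_lt_of_junction hbc hγ hδ hlow hγc hδb hE
    omega

end Junction

theorem conditional_triangle_inequality_general {t n p : ℕ} (v : Fin t) (d : Fin n)
    (A₀ : Config t n p) (a b c : Fin p)
    (hab : a ≠ b) (hac : a ≠ c) (hbc : b ≠ c)
    (α β : Config t n p) (hαfix : R (d : ℕ) b c α = α)
    (νA νC νB : List (Config t n p))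
    (hCne : νC ≠ []) (hBne : νB ≠ [])
    (hν : ValidSeq (νA ++ νC ++ νB))
    (hhead : (νA ++ νC ++ νB).head? = some α)
    (hlast : (νA ++ νC ++ νB).getLast? = some β)
    (hA : ∀ γ ∈ νA, InCluster (d : ℕ) A₀ γ ∧ γ v d = a)
    (hC : ∀ γ ∈ νC, InCluster (d : ℕ) A₀ γ ∧ γ v d = c)
    (hB : ∀ γ ∈ νB, InCluster (d : ℕ) A₀ γ ∧ γ v d = b) :
    ∃ μA μB : List (Config t n p),
      ValidSeq (μA ++ μB) ∧
      (μA ++ μB).head? = some α ∧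
      (μA ++ μB).getLast? = some β ∧
      (∀ γ ∈ μA, InCluster (d : ℕ) A₀ γ ∧ γ v d = a) ∧
      (∀ γ ∈ μB, InCluster (d : ℕ) A₀ γ ∧ γ v d = b) ∧
      transferLength (μA ++ μB) < transferLength (νA ++ νC ++ νB) := by
  obtain ⟨δ, νB, rfl⟩ := List.exists_cons_of_ne_nil hBne
  obtain ⟨hδcl, hδb⟩ := hB δ List.mem_cons_self
  have hAC : νA ++ νC ≠ [] := by simp [hCne]
  have hcl (γ) (hγ : γ ∈ νA ++ νC) : InCluster d A₀ γ :=
    (List.mem_append.1 hγ).elim (fun h => (hA γ h).1) (fun h => (hC γ h).1)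
  have hγc : (νA ++ νC).getLast hAC v d = c := by
    rw [List.getLast_append_of_ne_nil hAC hCne]
    exact (hC _ (List.getLast_mem hCne)).2
  obtain ⟨hμ, hlt⟩ := hν.reflect_prefix hbc hAC hcl hδcl hγc hδb
  have hsplit : νA.map (R d b c) ++ (νC.map (R d b c) ++ δ :: νB) =
      (νA ++ νC).map (R d b c) ++ δ :: νB := by simp
  refine ⟨νA.map (R d b c), νC.map (R d b c) ++ δ :: νB, hsplit ▸ hμ, ?_, ?_, ?_, ?_,
    hsplit ▸ hlt⟩
  · rw [List.head?_append_of_ne_nil _ hAC] at hhead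
    rw [hsplit, List.head?_append_of_ne_nil _ (by simpa using hAC), List.head?_map, hhead,
      Option.map_some, hαfix]
  · rw [List.getLast?_append_cons] at hlast
    rwa [hsplit, List.getLast?_append_cons]
  · rw [List.forall_mem_map]
    exact fun γ hγ => inCluster_R_and_apply_self (hA γ hγ) (Equiv.swap_apply_of_ne_of_ne hab hac)
  · rw [List.forall_mem_append, List.forall_mem_map]
    exact ⟨fun γ hγ => inCluster_R_and_apply_self (hC γ hγ) (Equiv.swap_apply_right b c), hB⟩

/-- conditional triangle inequality for clusters: a valid
sequence from `α ∈ A` (with `α` fixed by the reflection `R^g_{b,c}`) to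
`β ∈ B` that decomposes as parts contained in the subclusters `A`, `C`, `B` of
`A₀` (where disk `(v,g)` occupies posts `a`, `c`, `b` respectively) can be
replaced by a strictly shorter valid sequence decomposing into parts contained
in `A` and `B` only. -/
theorem conditional_triangle_inequality {t n p : ℕ} (v : Fin t) (d : Fin n)
    (A₀ : Config t n p) (a b c : Fin p)
    (hab : a ≠ b) (hac : a ≠ c) (hbc : b ≠ c)
    (α β : Config t n p) (hαfix : R (d : ℕ) b c α = α)
    (νA νC νB : List (Config t n p))
    (hAne : νA ≠ []) (hCne : νC ≠ []) (hBne : νB ≠ [])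
    (hν : ValidSeq (νA ++ νC ++ νB))
    (hhead : (νA ++ νC ++ νB).head? = some α)
    (hlast : (νA ++ νC ++ νB).getLast? = some β)
    (hA : ∀ γ ∈ νA, InCluster (d : ℕ) A₀ γ ∧ γ v d = a)
    (hC : ∀ γ ∈ νC, InCluster (d : ℕ) A₀ γ ∧ γ v d = c)
    (hB : ∀ γ ∈ νB, InCluster (d : ℕ) A₀ γ ∧ γ v d = b) :
    ∃ μA μB : List (Config t n p),
      ValidSeq (μA ++ μB) ∧
      (μA ++ μB).head? = some α ∧
      (μA ++ μB).getLast? = some β ∧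
      (∀ γ ∈ μA, InCluster (d : ℕ) A₀ γ ∧ γ v d = a) ∧
      (∀ γ ∈ μB, InCluster (d : ℕ) A₀ γ ∧ γ v d = b) ∧
      transferLength (μA ++ μB) < transferLength (νA ++ νC ++ νB) :=
  conditional_triangle_inequality_general v d A₀ a b c hab hac hbc α β hαfix νA νC νB hCne hBne hν
    hhead hlast hA hC hB
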